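/- arXiv:2006.04676 — 6 statements merged into one kernel-verified Lean document; each statement's English description precedes it below -/
import Mathlib

section
/- For every natural number n ≥ 1, setting a = ⌈√n⌉ and b = a - 1 if a(a-1) ≥ n, b = a otherwise, we have ab ≥ n and a + b = ⌈2√n⌉. -/
/-- The "integer square roots" `a ≥ b` of `n`: `a = ⌈√n⌉` and `b = a-1` if
`a(a-1) ≥ n`, `b = a` otherwise.  They satisfy `ab ≥ n` and `a + b = ⌈2√n⌉`. -/
theorem integer_square_roots (n : ℕ) (hn : 1 ≤ n) (a b : ℕ)
    (ha : a = ⌈Real.sqrt n⌉₊)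
    (hb : b = if n ≤ a * (a - 1) then a - 1 else a) :
    n ≤ a * b ∧ a + b = ⌈2 * Real.sqrt n⌉₊ := by
  have hn' : (1:ℝ) ≤ (n:ℝ) := by exact_mod_cast hn
  set s := Real.sqrt n with hs
  have hs0 : 0 ≤ s := Real.sqrt_nonneg _
  have hs2 : s ^ 2 = n := Real.sq_sqrt (by linarith)
  have hs1 : 0 < s := Real.sqrt_pos.mpr (by linarith)
  have ha1 : 1 ≤ a := by
    rw [ha]; exact Nat.one_le_iff_ne_zero.mpr (by
      simp only [ne_eq, Nat.ceil_eq_zero, not_le]; exact hs1)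
  obtain ⟨k, rfl⟩ : ∃ k, a = k + 1 := ⟨a - 1, by omega⟩
  have hle : s ≤ (k:ℝ) + 1 := by
    have := ha ▸ Nat.le_ceil s
    push_cast at this; linarith
  have hlt : (k : ℝ) < s := by
    have h : k < k + 1 := Nat.lt_succ_self k
    rw [ha] at h
    exact Nat.lt_ceil.mp h
  have hna : n ≤ (k + 1) * (k + 1) := by
    have : (n:ℝ) ≤ ((k:ℝ) + 1) * ((k:ℝ) + 1) := by nlinarith
    exact_mod_cast this
  simp only [Nat.add_sub_cancel] at hb
  by_cases hc : n ≤ (k + 1) * k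
  · rw [hb, if_pos hc]
    have hc' : (n:ℝ) ≤ ((k:ℝ) + 1) * (k:ℝ) := by exact_mod_cast hc
    refine ⟨hc, ?_⟩
    symm
    rw [Nat.ceil_eq_iff (by omega)]
    constructor
    · have e : k + 1 + k - 1 = 2 * k := by omega
      rw [e]; push_cast; linarith
    · push_cast
      nlinarith [sq_nonneg (2 * s - (2 * (k:ℝ) + 1))]
  · rw [hb, if_neg hc]
    refine ⟨hna, ?_⟩
    have hc'' : ((k:ℝ) + 1) * (k:ℝ) + 1 ≤ (n:ℝ) := by
      have : (k + 1) * k + 1 ≤ n := by omega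
      exact_mod_cast this
    symm
    rw [Nat.ceil_eq_iff (by omega)]
    constructor
    · have e : k + 1 + (k + 1) - 1 = 2 * k + 1 := by omega
      rw [e]; push_cast
      nlinarith [sq_nonneg (2 * s - (2 * (k:ℝ) + 1))]
    · push_cast
      linarith
end

section
/- For every natural number n ≥ 1, ⌈2√n⌉ = min { c + d : c, d ∈ ℕ, c ≥ 1, d ≥ 1, cd ≥ n }. -/
/-- `⌈2√n⌉` is the minimum of `c + d` over positive integers `c, d` with `cd ≥ n`. -/
theorem ceil_two_sqrt_eq_min (n : ℕ) (hn : 1 ≤ n) :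
    ⌈2 * Real.sqrt n⌉₊ =
      sInf {m : ℕ | ∃ c d : ℕ, 1 ≤ c ∧ 1 ≤ d ∧ n ≤ c * d ∧ m = c + d} := by
  have hne : {m : ℕ | ∃ c d : ℕ, 1 ≤ c ∧ 1 ≤ d ∧ n ≤ c * d ∧ m = c + d}.Nonempty :=
    ⟨n + n, n, n, hn, hn, Nat.le_mul_of_pos_left n (by omega), rfl⟩
  have hs : Real.sqrt n * Real.sqrt n = n := Real.mul_self_sqrt (by positivity)
  have hs0 : 0 ≤ Real.sqrt n := Real.sqrt_nonneg _
  apply le_antisymm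
  · obtain ⟨c, d, hc, hd, hcd, hm⟩ := Nat.sInf_mem hne
    rw [hm, Nat.ceil_le]
    have h1 : Real.sqrt n ≤ Real.sqrt (c * d) := by
      apply Real.sqrt_le_sqrt; exact_mod_cast hcd
    have h2 : Real.sqrt ((c : ℝ) * d) = Real.sqrt c * Real.sqrt d :=
      Real.sqrt_mul (by positivity) _
    have hc2 : Real.sqrt c * Real.sqrt c = (c : ℝ) := Real.mul_self_sqrt (by positivity)
    have hd2 : Real.sqrt d * Real.sqrt d = (d : ℝ) := Real.mul_self_sqrt (by positivity)
    push_cast at h1 ⊢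
    rw [h2] at h1
    nlinarith [sq_nonneg (Real.sqrt c - Real.sqrt d)]
  · set k := Nat.sqrt n with hk
    have hk1 : k * k ≤ n := by have := Nat.sqrt_le' n; nlinarith [this]
    have hk2 : n < (k + 1) * (k + 1) := by have := Nat.lt_succ_sqrt' n; nlinarith [this]
    have hk0 : 1 ≤ k := Nat.sqrt_pos.mpr hn
    rcases le_or_gt n (k * k) with hA | hB
    · -- n = k * k
      have hnk : n = k * k := le_antisymm hA hk1
      have hsq : Real.sqrt n = (k : ℝ) := by
        rw [hnk]; push_cast; exact Real.sqrt_mul_self (by positivity)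
      have hce : ⌈2 * Real.sqrt n⌉₊ = 2 * k := by
        rw [hsq]
        rw [show (2 : ℝ) * (k : ℝ) = ((2 * k : ℕ) : ℝ) by push_cast; ring, Nat.ceil_natCast]
      rw [hce]
      exact Nat.sInf_le ⟨k, k, hk0, hk0, hnk.le, by ring⟩
    · rcases le_or_gt n (k * k + k) with hC | hD
      · -- m = 2k + 1
        have hce : ⌈2 * Real.sqrt n⌉₊ = 2 * k + 1 := by
          rw [Nat.ceil_eq_iff (by omega)]
          have h1 : (k : ℝ) * k < n := by exact_mod_cast hB
          have h2 : (n : ℝ) ≤ k * k + k := by exact_mod_cast hC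
          constructor
          · push_cast
            nlinarith
          · push_cast
            nlinarith
        rw [hce]
        exact Nat.sInf_le ⟨k, k + 1, hk0, by omega, by nlinarith, by ring⟩
      · -- m = 2k + 2
        have hce : ⌈2 * Real.sqrt n⌉₊ = 2 * k + 2 := by
          rw [Nat.ceil_eq_iff (by omega)]
          have h1 : (k : ℝ) * k + k + 1 ≤ n := by exact_mod_cast hD
          have h2 : (n : ℝ) ≤ (k + 1) * (k + 1) := by
            have : n ≤ (k + 1) * (k + 1) := hk2.le
            exact_mod_cast this
          constructor
          · push_cast
            nlinarith
          · push_cast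
            nlinarith
        rw [hce]
        exact Nat.sInf_le ⟨k + 1, k + 1, by omega, by omega, hk2.le, by ring⟩
end

section
/- Let 𝔞 be a proper Lie subalgebra of the free 2-step nilpotent Lie algebra 𝔤 = 𝕂^r ⊕ Λ²𝕂^r. If the center of 𝔞 is not contained in Λ²𝕂^r, then 𝔞 is abelian and dim(𝔞 / (𝔞 ∩ Λ²𝕂^r)) = 1. -/
/-- The free 2-step nilpotent Lie algebra of rank `r`: `𝕂^r ⊕ Λ²𝕂^r`, where
`Λ²𝕂^r` is modeled by coordinates indexed by pairs `i < j`. -/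
abbrev FreeNilp2 (K : Type) [Field K] (r : ℕ) : Type :=
  (Fin r → K) × ({p : Fin r × Fin r // p.1 < p.2} → K)

/-- The wedge `x ∧ y` in coordinates. -/
def wedge {K : Type} [Field K] {r : ℕ} (x y : Fin r → K) :
    {p : Fin r × Fin r // p.1 < p.2} → K :=
  fun p => x p.1.1 * y p.1.2 - x p.1.2 * y p.1.1

noncomputable instance (K : Type) [Field K] (r : ℕ) : LieRing (FreeNilp2 K r) where
  bracket a b := (0, wedge a.1 b.1)
  add_lie a b c := by
    refine Prod.ext (by simp) (funext fun p => ?_)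
    show wedge (a.1 + b.1) c.1 p = wedge a.1 c.1 p + wedge b.1 c.1 p
    simp [wedge]; ring
  lie_add a b c := by
    refine Prod.ext (by simp) (funext fun p => ?_)
    show wedge a.1 (b.1 + c.1) p = wedge a.1 b.1 p + wedge a.1 c.1 p
    simp [wedge]; ring
  lie_self a := by
    refine Prod.ext (by simp) (funext fun p => ?_)
    show wedge a.1 a.1 p = 0
    simp [wedge]; ring
  leibniz_lie a b c := by
    refine Prod.ext (by simp) (funext fun p => ?_)
    show wedge a.1 (0 : Fin r → K) p =
      wedge (0 : Fin r → K) c.1 p + wedge b.1 (0 : Fin r → K) p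
    simp [wedge]

noncomputable instance (K : Type) [Field K] (r : ℕ) : LieAlgebra K (FreeNilp2 K r) where
  lie_smul t a b := by
    refine Prod.ext (by show (0 : Fin r → K) = t • (0 : Fin r → K); simp) (funext fun p => ?_)
    show wedge a.1 (t • b.1) p = t * wedge a.1 b.1 p
    simp [wedge]; ring

/-!
Centrality of `a` says `a.1 ∧ b.1 = 0` for every `b ∈ 𝔞`, so with `a.1 ≠ 0` every `b.1` is a multiple
of `a.1`: the projection of `𝔞` to `𝕂^r` is the line through `a.1`. Brackets in `𝔤` only see these
projections, and the wedge of two vectors on a common line vanishes, so `𝔞` is abelian.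
-/

section Wedge

variable {K : Type} [Field K] {r : ℕ}

theorem wedge_eq_zero_iff {x y : Fin r → K} :
    wedge x y = 0 ↔ ∀ i j, x i * y j = x j * y i := by
  constructor
  · intro h i j
    rcases lt_trichotomy i j with hij | rfl | hji
    · exact sub_eq_zero.mp (congrFun h ⟨(i, j), hij⟩)
    · ring
    · exact (sub_eq_zero.mp (congrFun h ⟨(j, i), hji⟩)).symm
  · intro h
    funext p
    simp only [wedge, Pi.zero_apply, h p.1.1 p.1.2, sub_self]

theorem mem_span_singleton_of_wedge_eq_zero {x y : Fin r → K} (hx : x ≠ 0)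
    (h : wedge x y = 0) : y ∈ K ∙ x := by
  obtain ⟨i, hi⟩ := Function.ne_iff.mp hx
  refine Submodule.mem_span_singleton.mpr ⟨y i / x i, funext fun j => ?_⟩
  rw [Pi.smul_apply, smul_eq_mul, div_mul_eq_mul_div, div_eq_iff hi]
  linear_combination -wedge_eq_zero_iff.mp h i j

theorem wedge_eq_zero_of_mem_span_singleton {v x y : Fin r → K} (hx : x ∈ K ∙ v)
    (hy : y ∈ K ∙ v) : wedge x y = 0 := by
  obtain ⟨c, rfl⟩ := Submodule.mem_span_singleton.mp hx
  obtain ⟨d, rfl⟩ := Submodule.mem_span_singleton.mp hy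
  refine wedge_eq_zero_iff.mpr fun i j => ?_
  simp only [Pi.smul_apply, smul_eq_mul]
  ring

end Wedge

namespace FreeNilp2

variable {K : Type} [Field K] {r : ℕ}

theorem lie_def (a b : FreeNilp2 K r) : ⁅a, b⁆ = (0, wedge a.1 b.1) := rfl

theorem map_fst_eq_span_of_mem_center {𝔞 : LieSubalgebra K (FreeNilp2 K r)}
    {a : FreeNilp2 K r} (ha : a ∈ 𝔞) (hcen : ∀ b ∈ 𝔞, ⁅a, b⁆ = 0) (hne : a.1 ≠ 0) :
    𝔞.toSubmodule.map (LinearMap.fst K _ _) = K ∙ a.1 := by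
  refine le_antisymm ?_ ((Submodule.span_singleton_le_iff_mem _ _).mpr ⟨a, ha, rfl⟩)
  rintro _ ⟨b, hb, rfl⟩
  exact mem_span_singleton_of_wedge_eq_zero hne (congrArg Prod.snd (hcen b hb))

end FreeNilp2

theorem proper_subalgebra_center_general (K : Type) [Field K] (r : ℕ)
    (𝔞 : LieSubalgebra K (FreeNilp2 K r))
    (hcen : ∃ a ∈ 𝔞, (∀ b ∈ 𝔞, ⁅a, b⁆ = 0) ∧ a.1 ≠ 0) :
    IsLieAbelian ↥𝔞 ∧
      Module.finrank K
        (Submodule.map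
          (LinearMap.fst K (Fin r → K) ({p : Fin r × Fin r // p.1 < p.2} → K))
          𝔞.toSubmodule) = 1 := by
  obtain ⟨a, ha, hcen, hne⟩ := hcen
  have hproj := FreeNilp2.map_fst_eq_span_of_mem_center ha hcen hne
  have hline : ∀ b ∈ 𝔞, b.1 ∈ K ∙ a.1 := fun b hb => hproj ▸ ⟨b, hb, rfl⟩
  refine ⟨⟨fun x y => Subtype.ext ?_⟩, hproj ▸ finrank_span_singleton hne⟩
  change ⁅(x : FreeNilp2 K r), (y : FreeNilp2 K r)⁆ = 0
  rw [FreeNilp2.lie_def,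
    wedge_eq_zero_of_mem_span_singleton (hline x x.2) (hline y y.2)]
  rfl

/-- If `𝔞` is a proper Lie subalgebra of the free 2-step nilpotent Lie algebra
`𝔤 = 𝕂^r ⊕ Λ²𝕂^r` whose center is not contained in `Λ²𝕂^r`, then `𝔞` is
abelian and `dim(𝔞 / (𝔞 ∩ Λ²𝕂^r)) = 1` (i.e. the projection of `𝔞` to `𝕂^r`
is 1-dimensional). -/
theorem proper_subalgebra_center (K : Type) [Field K] [CharZero K] (r : ℕ)
    (𝔞 : LieSubalgebra K (FreeNilp2 K r)) (hproper : 𝔞 ≠ ⊤)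
    (hcen : ∃ a ∈ 𝔞, (∀ b ∈ 𝔞, ⁅a, b⁆ = 0) ∧ a.1 ≠ 0) :
    IsLieAbelian ↥𝔞 ∧
      Module.finrank K
        (Submodule.map
          (LinearMap.fst K (Fin r → K) ({p : Fin r × Fin r // p.1 < p.2} → K))
          𝔞.toSubmodule) = 1 :=
  proper_subalgebra_center_general K r 𝔞 hcen
end

section
/- For r ≥ 2, the map π₀ sending X = Σᵢ xᵢXᵢ + Σ_{i<j} z_{ij}Z_{ij} in the free 2-step nilpotent Lie algebra of rank r to the (2r+1)×(2r+1) matrix with x-entries in the column r+1 rows 1..r, x-entries in row r+1 columns r+2..2r+1 (in reversed order), skew-symmetric z-entries in the top-right r×r block, and zeros elsewhere (as described in the standard type-B parabolic nilradical embedding), is an injective Lie algebra homomorphism. In particular μ(𝓛_{r,2}) ≤ 2r+1. -/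
attribute [local instance 100] LieRing.ofAssociativeRing

/-- The minimal dimension of a faithful representation of a Lie algebra. -/
noncomputable def lieMu (K : Type) [Field K] (g : Type) [LieRing g] [LieAlgebra K g] : ℕ :=
  sInf {n : ℕ | ∃ π : g →ₗ⁅K⁆ Matrix (Fin n) (Fin n) K, Function.Injective π}

/-- The skew-symmetric matrix entry determined by `u ∈ Λ²𝕂^r`. -/
def zEntry {K : Type} [Field K] {r : ℕ}
    (u : {p : Fin r × Fin r // p.1 < p.2} → K) (i j : Fin r) : K :=
  if h : i < j then u ⟨(i, j), h⟩ else if h' : j < i then -u ⟨(j, i), h'⟩ else 0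

/-- The standard `(2r+1)`-dimensional representation `π₀` of the free 2-step
nilpotent Lie algebra of rank `r` (type-B parabolic nilradical embedding):
`x`-entries in the middle column and middle row, skew-symmetric `z`-entries in
the top-right `r × r` block, zeros elsewhere. -/
def pi0 {K : Type} [Field K] {r : ℕ} (a : FreeNilp2 K r) :
    Matrix (Fin r ⊕ Unit ⊕ Fin r) (Fin r ⊕ Unit ⊕ Fin r) K :=
  fun i j =>
    match i, j with
    | Sum.inl i, Sum.inr (Sum.inl _) => a.1 i
    | Sum.inr (Sum.inl _), Sum.inr (Sum.inr j) => a.1 j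
    | Sum.inl i, Sum.inr (Sum.inr j) => zEntry a.2 i j
    | _, _ => 0

/-! In the image of `pi0` the only nonzero entries of a product `pi0 a * pi0 b` are
`a.1 i * b.1 j`, obtained by going through the middle index from row `i` to column `r + 1 + j`.
Hence the commutator carries the skew-symmetric matrix of `a.1 ∧ b.1` in the top-right block,
which is `pi0 ⁅a, b⁆`. Injectivity holds because every coordinate of `a` is a matrix entry. -/

section ZEntry

variable {K : Type} [Field K] {r : ℕ}

theorem zEntry_of_lt (u : {p : Fin r × Fin r // p.1 < p.2} → K) {i j : Fin r} (h : i < j) :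
    zEntry u i j = u ⟨(i, j), h⟩ :=
  dif_pos h

theorem zEntry_add (u v : {p : Fin r × Fin r // p.1 < p.2} → K) (i j : Fin r) :
    zEntry (u + v) i j = zEntry u i j + zEntry v i j := by
  unfold zEntry
  split_ifs <;> simp only [Pi.add_apply, neg_add, add_zero]

theorem zEntry_smul (t : K) (u : {p : Fin r × Fin r // p.1 < p.2} → K) (i j : Fin r) :
    zEntry (t • u) i j = t * zEntry u i j := by
  unfold zEntry
  split_ifs <;> simp only [Pi.smul_apply, smul_eq_mul, mul_neg, mul_zero]

theorem zEntry_wedge (x y : Fin r → K) (i j : Fin r) :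
    zEntry (wedge x y) i j = x i * y j - y i * x j := by
  unfold zEntry wedge
  rcases lt_trichotomy i j with h | rfl | h
  · rw [dif_pos h]; ring
  · rw [dif_neg (lt_irrefl i), dif_neg (lt_irrefl i)]; ring
  · rw [dif_neg (asymm h), dif_pos h]; ring

end ZEntry

section Pi0

variable {K : Type} [Field K] {r : ℕ}

theorem pi0_injective : Function.Injective (pi0 (K := K) (r := r)) := by
  intro a b h
  refine Prod.ext (funext fun i => ?_) (funext fun p => ?_)
  · exact congrFun (congrFun h (Sum.inl i)) (Sum.inr (Sum.inl ()))
  · have hp := congrFun (congrFun h (Sum.inl p.1.1)) (Sum.inr (Sum.inr p.1.2))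
    simpa only [pi0, zEntry_of_lt _ p.2] using hp

theorem pi0_add (a b : FreeNilp2 K r) : pi0 (a + b) = pi0 a + pi0 b := by
  ext (i | _ | i) (j | _ | j) <;> simp [pi0, zEntry_add]

theorem pi0_smul (t : K) (a : FreeNilp2 K r) : pi0 (t • a) = t • pi0 a := by
  ext (i | _ | i) (j | _ | j) <;> simp [pi0, zEntry_smul]

theorem pi0_lie (a b : FreeNilp2 K r) : pi0 ⁅a, b⁆ = ⁅pi0 a, pi0 b⁆ := by
  have hbr : (⁅a, b⁆ : FreeNilp2 K r) = (0, wedge a.1 b.1) := rfl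
  rw [Ring.lie_def, hbr]
  ext (i | _ | i) (j | _ | j) <;> simp [pi0, Matrix.mul_apply, zEntry_wedge]

def pi0LieHom (K : Type) [Field K] (r : ℕ) :
    FreeNilp2 K r →ₗ⁅K⁆ Matrix (Fin r ⊕ Unit ⊕ Fin r) (Fin r ⊕ Unit ⊕ Fin r) K where
  toFun := pi0
  map_add' := pi0_add
  map_smul' := pi0_smul
  map_lie' := pi0_lie _ _

end Pi0

theorem lieMu_le_card {K : Type} [Field K] {g : Type} [LieRing g] [LieAlgebra K g]
    {ι : Type} [Fintype ι] [DecidableEq ι] (π : g →ₗ⁅K⁆ Matrix ι ι K)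
    (hπ : Function.Injective π) : lieMu K g ≤ Fintype.card ι := by
  let e := Matrix.reindexLieEquiv (R := K) (Fintype.equivFin ι)
  exact Nat.sInf_le ⟨e.toLieHom.comp π, e.injective.comp hπ⟩

theorem pi0_injective_lieHom_general (K : Type) [Field K] (r : ℕ) :
    Function.Injective (pi0 (K := K) (r := r)) ∧
      (∀ a b : FreeNilp2 K r, pi0 (a + b) = pi0 a + pi0 b) ∧
      (∀ (t : K) (a : FreeNilp2 K r), pi0 (t • a) = t • pi0 a) ∧
      (∀ a b : FreeNilp2 K r, pi0 ⁅a, b⁆ = ⁅pi0 a, pi0 b⁆) ∧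
      lieMu K (FreeNilp2 K r) ≤ 2 * r + 1 := by
  refine ⟨pi0_injective, pi0_add, pi0_smul, pi0_lie, ?_⟩
  calc lieMu K (FreeNilp2 K r)
      ≤ Fintype.card (Fin r ⊕ Unit ⊕ Fin r) := lieMu_le_card (pi0LieHom K r) pi0_injective
    _ = 2 * r + 1 := by simp only [Fintype.card_sum, Fintype.card_fin, Fintype.card_unit]; ring

/-- `π₀` is an injective Lie algebra homomorphism into the `(2r+1) × (2r+1)`
matrices; in particular `μ(𝓛_{r,2}) ≤ 2r + 1`. -/
theorem pi0_injective_lieHom (K : Type) [Field K] [CharZero K] (r : ℕ) (hr : 2 ≤ r) :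
    Function.Injective (pi0 (K := K) (r := r)) ∧
      (∀ a b : FreeNilp2 K r, pi0 (a + b) = pi0 a + pi0 b) ∧
      (∀ (t : K) (a : FreeNilp2 K r), pi0 (t • a) = t • pi0 a) ∧
      (∀ a b : FreeNilp2 K r, pi0 ⁅a, b⁆ = ⁅pi0 a, pi0 b⁆) ∧
      lieMu K (FreeNilp2 K r) ≤ 2 * r + 1 :=
  pi0_injective_lieHom_general K r
end

section
/- Let π : 𝓛_{r,2} → gl(V) be a faithful representation of the free 2-step nilpotent Lie algebra of rank r, of type (a,p,b), i.e., with respect to some decomposition V = V₁ ⊕ V₂ ⊕ V₃ with dim V₁ = a, dim V₂ = p, dim V₃ = b, the matrix of every π(X) is strictly block upper triangular with blocks of sizes a, p, b. Then r(r-1)/2 ≤ ab. -/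
/-- The block index of a basis vector, for block sizes `a, p, b`. -/
def blk {a p b : ℕ} : Fin a ⊕ Fin p ⊕ Fin b → Fin 3
  | Sum.inl _ => 0
  | Sum.inr (Sum.inl _) => 1
  | Sum.inr (Sum.inr _) => 2

/-- A matrix is strictly block upper triangular (blocks of sizes `a, p, b`) if
its only nonzero entries lie in the blocks `(1,2)`, `(1,3)` and `(2,3)`. -/
def StrictBlockUpper {K : Type} [Field K] {a p b : ℕ}
    (M : Matrix (Fin a ⊕ Fin p ⊕ Fin b) (Fin a ⊕ Fin p ⊕ Fin b) K) : Prop :=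
  ∀ i j, ¬ blk i < blk j → M i j = 0

attribute [local instance 100] LieRing.ofAssociativeRing

section Aux
variable {K : Type} [Field K] {a p b : ℕ}

lemma mul_entry_zero {M N : Matrix (Fin a ⊕ Fin p ⊕ Fin b) (Fin a ⊕ Fin p ⊕ Fin b) K}
    (hM : StrictBlockUpper M) (hN : StrictBlockUpper N)
    (i j : Fin a ⊕ Fin p ⊕ Fin b) (h : (blk i).val ≠ 0 ∨ (blk j).val ≠ 2) :
    (M * N) i j = 0 := by
  rw [Matrix.mul_apply]
  refine Finset.sum_eq_zero fun k _ => ?_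
  by_cases h1 : blk i < blk k
  · by_cases h2 : blk k < blk j
    · exfalso
      have := (blk i).isLt; have := (blk j).isLt; have := (blk k).isLt
      rw [Fin.lt_def] at h1 h2
      omega
    · rw [hN k j h2, mul_zero]
  · rw [hM i k h1, zero_mul]

lemma comm_entry_zero {M N : Matrix (Fin a ⊕ Fin p ⊕ Fin b) (Fin a ⊕ Fin p ⊕ Fin b) K}
    (hM : StrictBlockUpper M) (hN : StrictBlockUpper N)
    (i j : Fin a ⊕ Fin p ⊕ Fin b) (h : (blk i).val ≠ 0 ∨ (blk j).val ≠ 2) :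
    ⁅M, N⁆ i j = 0 := by
  have : ⁅M, N⁆ = M * N - N * M := rfl
  rw [this, Matrix.sub_apply, mul_entry_zero hM hN i j h, mul_entry_zero hN hM i j h, sub_zero]

lemma wedge_single {r : ℕ} (q : {p : Fin r × Fin r // p.1 < p.2}) :
    wedge (Pi.single q.1.1 (1:K)) (Pi.single q.1.2 1) = Pi.single q 1 := by
  obtain ⟨⟨i, j⟩, hij⟩ := q
  funext q'
  obtain ⟨⟨i', j'⟩, hij'⟩ := q'
  have hij2 : i.val < j.val := hij
  have hij'2 : i'.val < j'.val := hij'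
  simp only [wedge, Pi.single_apply, Subtype.mk.injEq, Prod.mk.injEq]
  split_ifs <;> simp_all [Fin.ext_iff] <;> omega

end Aux

/-- If the free 2-step nilpotent Lie algebra of rank `r` has a faithful
representation of type `(a, p, b)` then `r(r-1)/2 ≤ ab`. -/
theorem type_apb_ab_bound (K : Type) [Field K] [CharZero K] (r a p b : ℕ)
    (π : FreeNilp2 K r →ₗ⁅K⁆ Matrix (Fin a ⊕ Fin p ⊕ Fin b) (Fin a ⊕ Fin p ⊕ Fin b) K)
    (hinj : Function.Injective π)
    (hblock : ∀ X : FreeNilp2 K r, StrictBlockUpper (π X)) :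
    r * (r - 1) / 2 ≤ a * b := by
  classical
  let E : Fin r → FreeNilp2 K r := fun i => (Pi.single i 1, 0)
  have hbr : ∀ q : {p : Fin r × Fin r // p.1 < p.2},
      (⁅E q.1.1, E q.1.2⁆ : FreeNilp2 K r) = (0, Pi.single q 1) :=
    fun q => Prod.ext rfl (wedge_single q)
  have hdec : ∀ u : {p : Fin r × Fin r // p.1 < p.2} → K,
      ((0, u) : FreeNilp2 K r) =
        ∑ q : {p : Fin r × Fin r // p.1 < p.2}, u q • ⁅E q.1.1, E q.1.2⁆ := by
    intro u
    refine Prod.ext ?_ ?_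
    · rw [Prod.fst_sum]
      simp [hbr]
    · rw [Prod.snd_sum]
      have h2 : ∀ q : {p : Fin r × Fin r // p.1 < p.2},
          (u q • (⁅E q.1.1, E q.1.2⁆ : FreeNilp2 K r)).2 = Pi.single q (u q) := by
        intro q
        rw [hbr]
        show u q • (Pi.single q 1 : {p : Fin r × Fin r // p.1 < p.2} → K)
          = Pi.single q (u q)
        rw [← Pi.single_smul, smul_eq_mul, mul_one]
      rw [Finset.sum_congr rfl fun q _ => h2 q]
      exact (Finset.univ_sum_single u).symm
  have key : ∀ (u : {p : Fin r × Fin r // p.1 < p.2} → K)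
      (i j : Fin a ⊕ Fin p ⊕ Fin b), ((blk i).val ≠ 0 ∨ (blk j).val ≠ 2) →
      π (0, u) i j = 0 := by
    intro u i j hij
    have hsum : π (0, u) = ∑ q : {p : Fin r × Fin r // p.1 < p.2},
        u q • ⁅π (E q.1.1), π (E q.1.2)⁆ := by
      rw [hdec u]
      rw [show π (∑ q : {p : Fin r × Fin r // p.1 < p.2}, u q • ⁅E q.1.1, E q.1.2⁆)
          = π.toLinearMap (∑ q : {p : Fin r × Fin r // p.1 < p.2}, u q • ⁅E q.1.1, E q.1.2⁆)
          from rfl, map_sum]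
      refine Finset.sum_congr rfl fun q _ => ?_
      rw [map_smul]
      rw [show π.toLinearMap ⁅E q.1.1, E q.1.2⁆ = π ⁅E q.1.1, E q.1.2⁆ from rfl,
        LieHom.map_lie]
    rw [hsum, Matrix.sum_apply]
    refine Finset.sum_eq_zero fun q _ => ?_
    rw [Matrix.smul_apply, comm_entry_zero (hblock _) (hblock _) i j hij, smul_zero]
  let φ : ({p : Fin r × Fin r // p.1 < p.2} → K) →ₗ[K] Matrix (Fin a) (Fin b) K :=
    { toFun := fun u => Matrix.of fun i j => π (0, u) (Sum.inl i) (Sum.inr (Sum.inr j))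
      map_add' := by
        intro u v
        funext i j
        have h : ((0, u + v) : FreeNilp2 K r) = (0, u) + (0, v) := Prod.ext (by simp) rfl
        show π (0, u + v) (Sum.inl i) (Sum.inr (Sum.inr j)) = _
        rw [h, show π (((0, u) : FreeNilp2 K r) + (0, v))
          = π.toLinearMap (((0, u) : FreeNilp2 K r) + (0, v)) from rfl, map_add]
        rfl
      map_smul' := by
        intro c u
        funext i j
        have h : ((0, c • u) : FreeNilp2 K r) = c • ((0, u) : FreeNilp2 K r) :=
          Prod.ext (by simp) rfl
        show π (0, c • u) (Sum.inl i) (Sum.inr (Sum.inr j)) = _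
        rw [h, show π (c • ((0, u) : FreeNilp2 K r))
          = π.toLinearMap (c • ((0, u) : FreeNilp2 K r)) from rfl, map_smul]
        rfl }
  have hφinj : Function.Injective φ := by
    rw [injective_iff_map_eq_zero]
    intro u hu
    have hπ0 : π (0, u) = 0 := by
      ext i j
      rcases i with i | i | i <;> rcases j with j | j | j
      · exact key u _ _ (Or.inr (by simp [blk]))
      · exact key u _ _ (Or.inr (by simp [blk]))
      · exact congrFun (congrFun (congrArg Matrix.of.symm hu) i) j
      all_goals exact key u _ _ (Or.inl (by simp [blk]))
    have hz : π 0 = 0 := π.toLinearMap.map_zero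
    have h0 : ((0, u) : FreeNilp2 K r) = 0 := hinj (hπ0.trans hz.symm)
    exact congrArg Prod.snd h0
  have hcard : Fintype.card {p : Fin r × Fin r // p.1 < p.2} = r * (r - 1) / 2 := by
    have e : {p : Fin r × Fin r // p.1 < p.2} ≃ (Σ j : Fin r, Fin j.val) :=
      { toFun := fun q => ⟨q.1.2, ⟨q.1.1.val, q.2⟩⟩
        invFun := fun s => ⟨(⟨s.2.val, s.2.isLt.trans s.1.isLt⟩, s.1), s.2.isLt⟩
        left_inv := fun q => rfl
        right_inv := fun s => rfl }
    rw [Fintype.card_congr e, Fintype.card_sigma]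
    simp only [Fintype.card_fin]
    rw [Fin.sum_univ_eq_sum_range (fun i => i) r, Finset.sum_range_id]
  have hle := LinearMap.finrank_le_finrank_of_injective hφinj
  rwa [Module.finrank_fintype_fun_eq_card, hcard, Module.finrank_matrix,
    Fintype.card_fin, Fintype.card_fin, Module.finrank_self, mul_one] at hle
end

section
/- Let π : 𝓛_{r,2} → gl(V) be a faithful representation of type (a,p,b) of the free 2-step nilpotent Lie algebra of rank r. Then r ≤ p·min(a,b) + 1. -/
attribute [local instance 100] LieRing.ofAssociativeRing

/-! For generators `x` of `𝓛_{r,2}` let `C(x)` be the `(2,3)`-block of `π(x)`. A product of two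
strictly block upper triangular matrices only involves `(1,2)`-blocks times `(2,3)`-blocks, so
if `C(x) = C(y) = 0` then `π(x)` and `π(y)` commute, and faithfulness forces `x ∧ y = 0`. A
subspace of `𝕂^r` on which the wedge vanishes is at most a line, so `ker C` has dimension at
most one and rank-nullity gives `r ≤ p·b + 1`. The `(1,2)`-blocks give `r ≤ a·p + 1` in the same
way. -/

open Module

section Wedge

variable {K : Type} [Field K] {r : ℕ}

theorem mul_eq_mul_of_wedge_eq_zero {x y : Fin r → K} (h : wedge x y = 0) (i j : Fin r) :
    x i * y j = x j * y i := by
  rcases lt_trichotomy i j with hij | rfl | hji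
  · exact sub_eq_zero.mp (congrFun h ⟨(i, j), hij⟩)
  · rfl
  · exact (sub_eq_zero.mp (congrFun h ⟨(j, i), hji⟩)).symm

theorem Submodule.finrank_le_one_of_wedge_eq_zero (W : Submodule K (Fin r → K))
    (hW : ∀ x ∈ W, ∀ y ∈ W, wedge x y = 0) : finrank K W ≤ 1 := by
  rcases eq_or_ne W ⊥ with rfl | hne
  · simp
  obtain ⟨x, hxW, hx⟩ := (Submodule.ne_bot_iff W).mp hne
  obtain ⟨i, hi⟩ : ∃ i, x i ≠ 0 := Function.ne_iff.mp hx
  -- every `y ∈ W` is proportional to `x`, with ratio read off in coordinate `i`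
  refine finrank_le_one ⟨x, hxW⟩ fun ⟨y, hyW⟩ => ⟨y i / x i, Subtype.ext <| funext fun j => ?_⟩
  have hminor := mul_eq_mul_of_wedge_eq_zero (hW x hxW y hyW) j i
  change y i / x i * x j = y j
  field_simp
  linear_combination hminor

theorem le_finrank_add_one_of_wedge_ker {M : Type*} [AddCommGroup M] [Module K M]
    [FiniteDimensional K M] (f : (Fin r → K) →ₗ[K] M)
    (hf : ∀ x y, f x = 0 → f y = 0 → wedge x y = 0) : r ≤ finrank K M + 1 := by
  have hker : finrank K (LinearMap.ker f) ≤ 1 :=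
    (LinearMap.ker f).finrank_le_one_of_wedge_eq_zero fun x hx y hy => hf x y hx hy
  have hrange : finrank K (LinearMap.range f) ≤ finrank K M := Submodule.finrank_le _
  have := LinearMap.finrank_range_add_finrank_ker f
  rw [finrank_fin_fun] at this
  omega

end Wedge

section Faithful

variable {K : Type} [Field K] {r : ℕ} {L : Type*} [LieRing L] [LieAlgebra K L]

theorem FreeNilp2.wedge_eq_zero_of_lie_eq_zero {π : FreeNilp2 K r →ₗ⁅K⁆ L}
    (hinj : Function.Injective π) {x y : Fin r → K}
    (h : ⁅π (x, 0), π (y, 0)⁆ = 0) : wedge x y = 0 := by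
  have : π ⁅((x, 0) : FreeNilp2 K r), (y, 0)⁆ = π 0 := by rw [LieHom.map_lie, h, map_zero]
  exact congrArg Prod.snd (hinj this)

theorem FreeNilp2.le_finrank_add_one {M : Type*} [AddCommGroup M] [Module K M]
    [FiniteDimensional K M] {π : FreeNilp2 K r →ₗ⁅K⁆ L} (hinj : Function.Injective π)
    (f : L →ₗ[K] M)
    (hf : ∀ x y, f (π (x, 0)) = 0 → f (π (y, 0)) = 0 → ⁅π (x, 0), π (y, 0)⁆ = 0) :
    r ≤ finrank K M + 1 :=
  le_finrank_add_one_of_wedge_ker (f ∘ₗ π.toLinearMap ∘ₗ LinearMap.inl K _ _)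
    fun x y hx hy => wedge_eq_zero_of_lie_eq_zero hinj (hf x y hx hy)

end Faithful

section StrictBlockUpper

variable {K : Type} [Field K] {a p b : ℕ}
  {M N : Matrix (Fin a ⊕ Fin p ⊕ Fin b) (Fin a ⊕ Fin p ⊕ Fin b) K}

def Matrix.submatrixLinearMap {l m n o : Type*} (f : l → m) (g : o → n) :
    Matrix m n K →ₗ[K] Matrix l o K where
  toFun A := A.submatrix f g
  map_add' _ _ := rfl
  map_smul' _ _ := rfl

theorem StrictBlockUpper.mul_apply (hM : StrictBlockUpper M) (hN : StrictBlockUpper N) (i j) :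
    (M * N) i j = ∑ k : Fin p, M i (Sum.inr (Sum.inl k)) * N (Sum.inr (Sum.inl k)) j := by
  have hleft : ∀ k, M i (Sum.inl k) = 0 := fun k => hM _ _ (Fin.not_lt_zero _)
  have hright : ∀ k, N (Sum.inr (Sum.inr k)) j = 0 := fun k => hN _ _ (not_lt.mpr (Fin.le_last _))
  simp [Matrix.mul_apply, Fintype.sum_sum_type, hleft, hright]

theorem StrictBlockUpper.mul_eq_zero_of_block12 (hM : StrictBlockUpper M)
    (hN : StrictBlockUpper N)
    (h12 : M.submatrix Sum.inl (Sum.inr ∘ Sum.inl) = 0) : M * N = 0 := by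
  ext i j
  rw [hM.mul_apply hN]
  refine Finset.sum_eq_zero fun k _ => ?_
  suffices M i (Sum.inr (Sum.inl k)) = 0 by rw [this, zero_mul]
  rcases i with i | i | i
  · exact congrFun (congrFun h12 i) k
  all_goals exact hM _ _ (by simp only [blk]; decide)

theorem StrictBlockUpper.mul_eq_zero_of_block23 (hM : StrictBlockUpper M)
    (hN : StrictBlockUpper N)
    (h23 : N.submatrix (Sum.inr ∘ Sum.inl) (Sum.inr ∘ Sum.inr) = 0) : M * N = 0 := by
  ext i j
  rw [hM.mul_apply hN]
  refine Finset.sum_eq_zero fun k _ => ?_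
  suffices N (Sum.inr (Sum.inl k)) j = 0 by rw [this, mul_zero]
  rcases j with j | j | j
  iterate 2 exact hN _ _ (by simp only [blk]; decide)
  · exact congrFun (congrFun h23 k) j

end StrictBlockUpper

theorem type_apb_r_bound_general (K : Type) [Field K] (r a p b : ℕ)
    (π : FreeNilp2 K r →ₗ⁅K⁆ Matrix (Fin a ⊕ Fin p ⊕ Fin b) (Fin a ⊕ Fin p ⊕ Fin b) K)
    (hinj : Function.Injective π)
    (hblock : ∀ X : FreeNilp2 K r, StrictBlockUpper (π X)) :
    r ≤ p * min a b + 1 := by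
  have hlie (X Y) (hXY : π X * π Y = 0) (hYX : π Y * π X = 0) : ⁅π X, π Y⁆ = 0 := by
    rw [Ring.lie_def, hXY, hYX, sub_zero]
  have hab : r ≤ a * p + 1 := by
    simpa [finrank_matrix] using FreeNilp2.le_finrank_add_one hinj
      (Matrix.submatrixLinearMap (K := K) Sum.inl (Sum.inr ∘ Sum.inl))
      fun x y hx hy => hlie _ _ ((hblock _).mul_eq_zero_of_block12 (hblock _) hx)
        ((hblock _).mul_eq_zero_of_block12 (hblock _) hy)
  have hpb : r ≤ p * b + 1 := by
    simpa [finrank_matrix] using FreeNilp2.le_finrank_add_one hinj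
      (Matrix.submatrixLinearMap (K := K) (Sum.inr ∘ Sum.inl) (Sum.inr ∘ Sum.inr))
      fun x y hx hy => hlie _ _ ((hblock _).mul_eq_zero_of_block23 (hblock _) hy)
        ((hblock _).mul_eq_zero_of_block23 (hblock _) hx)
  rcases le_total a b with h | h
  · rwa [min_eq_left h, mul_comm]
  · rwa [min_eq_right h]

/-- If the free 2-step nilpotent Lie algebra of rank `r` has a faithful
representation of type `(a, p, b)` (with the central elements supported in the
block `(1,3)`), then `r ≤ p·min(a,b) + 1`. -/
theorem type_apb_r_bound (K : Type) [Field K] [CharZero K] (r a p b : ℕ)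
    (π : FreeNilp2 K r →ₗ⁅K⁆ Matrix (Fin a ⊕ Fin p ⊕ Fin b) (Fin a ⊕ Fin p ⊕ Fin b) K)
    (hinj : Function.Injective π)
    (hblock : ∀ X : FreeNilp2 K r, StrictBlockUpper (π X))
    (hcentral : ∀ z : FreeNilp2 K r, z.1 = 0 →
      ∀ i j, ¬ (blk i = 0 ∧ blk j = 2) → π z i j = 0) :
    r ≤ p * min a b + 1 :=
  type_apb_r_bound_general K r a p b π hinj hblock
end
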